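/- Let G be a finite planar weighted graph with edge weights x, and let Z_Ising(G,x) = Σ_{P ∈ E(G)_even} Π_{e∈P} x_e be the even-subgraph generating polynomial. Then the signed dimer partition function on the terminal graph G^K satisfies Σ_{D ∈ D(G^K)} (-1)^{t(D)} x^K(D) = Z_Ising(G,x), where t(D) is the number of pairs of crossing edges in D and x^K assigns weight 1 to long edges and weight (x_e x_{e'})^{1/2} to the short edge joining adjacent oriented edges e, e'. -/

import Mathlib

open scoped Classical
open Matrix

noncomputable section

variable {V F : Type*}

/-- Origin (tail) of an oriented edge `(f, b)` of the graph with endpoint map `ends`. -/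
def oTail (ends : F → V × V) (p : F × Bool) : V :=
  if p.2 then (ends p.1).1 else (ends p.1).2

/-- Head (terminal vertex) of an oriented edge. -/
def oHead (ends : F → V × V) (p : F × Bool) : V :=
  if p.2 then (ends p.1).2 else (ends p.1).1

/-- Reversal of an oriented edge. -/
def oRev (p : F × Bool) : F × Bool := (p.1, !p.2)

/-- Direction (as a complex number) of an oriented edge in the straight-line drawing
given by the vertex positions `pos`. -/
def oDir (ends : F → V × V) (pos : V → ℂ) (p : F × Bool) : ℂ :=
  pos (oHead ends p) - pos (oTail ends p)

/-- The angle (argument of the direction) of an oriented edge. -/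
def oAng (ends : F → V × V) (pos : V → ℂ) (p : F × Bool) : ℝ :=
  Complex.arg (oDir ends pos p)

/-- A dimer configuration (perfect matching) on the terminal graph `G^K`: a fixed-point
free involution of the oriented edges of `G`, matching each oriented edge either to its
reversal (a "long" dimer) or to another oriented edge with the same origin
(a "short" dimer). -/
def IsTerminalMatching (ends : F → V × V) (m : F × Bool → F × Bool) : Prop :=
  Function.Involutive m ∧ (∀ p, m p ≠ p) ∧
    ∀ p, m p = oRev p ∨ oTail ends (m p) = oTail ends p

/-- An even subgraph: a set of edges in which every vertex has even degree. -/
def IsEvenSubgraph [Fintype F] [DecidableEq V] (ends : F → V × V) (P : Finset F) :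
    Prop :=
  ∀ v : V, Even ((P.filter (fun f => (ends f).1 = v)).card +
    (P.filter (fun f => (ends f).2 = v)).card)

/-- The weight `x^K(D)` of a dimer configuration: long edges have weight `1` and the
short edge joining `e, e'` has weight `(x_e x_{e'})^{1/2}`. -/
def matchWeight [Fintype F] (x : F → ℝ) (m : F × Bool → F × Bool) : ℝ :=
  ∏ p ∈ Finset.univ.filter (fun p : F × Bool => m p ≠ oRev p), Real.sqrt (x p.1)

/-- `p` is the endpoint of a short dimer of `m` with the smaller angle. -/
def isLow (ends : F → V × V) (pos : V → ℂ) (m : F × Bool → F × Bool)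
    (p : F × Bool) : Prop :=
  m p ≠ oRev p ∧ oAng ends pos p < oAng ends pos (m p)

/-- The number `t(D)` of pairs of (short) dimers of `m` that cross in the drawing:
two chords at the same vertex cross iff their angles interleave in the cyclic order. -/
def selfCross [Fintype F] (ends : F → V × V) (pos : V → ℂ)
    (m : F × Bool → F × Bool) : ℕ :=
  (Finset.univ.filter (fun pr : (F × Bool) × (F × Bool) =>
    isLow ends pos m pr.1 ∧ isLow ends pos m pr.2 ∧
    oTail ends pr.1 = oTail ends pr.2 ∧
    oAng ends pos pr.1 < oAng ends pos pr.2 ∧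
    oAng ends pos pr.2 < oAng ends pos (m pr.1) ∧
    oAng ends pos (m pr.1) < oAng ends pos (m pr.2))).card

/-!
Forgetting the long dimers turns a dimer configuration `D` of `G^K` into the set `P` of edges
carrying short dimers together with a perfect matching, inside each vertex, of the darts of `P`
leaving that vertex; the long dimers are then forced. So `P` is even, `x^K(D) = x(P)`, and `t(D)`
counts the interleaving pairs of chords of that matching. It remains to see that for darts whose
every vertex fibre has even size the signed count of these matchings is `1`. Match the first dart
`p₀` of a fibre, in angular order, to `q`: the chord `p₀q` crosses exactly the chords with one end
strictly between `p₀` and `q`, and since the chords with both ends there pair up, the sign is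
`(-1)^r` where `r` is the number of darts between them. By induction the total is the alternating
sum `Σ (-1)^r` over the odd number of candidates `q`, which is `1`.
-/

open Finset

section FiberMatching

variable {A W : Type*}

theorem even_card_of_involution {C : Finset A} (σ : A → A) (hmem : ∀ a ∈ C, σ a ∈ C)
    (hinv : ∀ a ∈ C, σ (σ a) = a) (hne : ∀ a ∈ C, σ a ≠ a) : Even #C := by
  rw [← ZMod.natCast_eq_zero_iff_even, card_eq_sum_ones, Nat.cast_sum, Nat.cast_one]
  exact sum_involution (fun a _ => σ a) (fun _ _ => by decide) (fun a ha _ => hne a ha) hmem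
    hinv

theorem sum_neg_one_pow_card_filter_lt {R : Type*} [Ring R] (α : A → ℝ)
    {T : Finset A} (hT : Set.InjOn α T) :
    ∑ q ∈ T, (-1 : R) ^ #(T.filter (α · < α q)) = if Even #T then 0 else 1 := by
  induction T using Finset.induction_on_max_value α with
  | empty => simp
  | insert a s has hmax ih =>
    have hlt : ∀ x ∈ s, α x < α a := fun x hx => (hmax x hx).lt_of_ne fun h =>
      has (hT (mem_insert_of_mem hx) (mem_insert_self a s) h ▸ hx)
    have hrank_a : (insert a s).filter (α · < α a) = s := by
      rw [filter_insert, if_neg (lt_irrefl _), filter_true_of_mem hlt]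
    have hrank : ∀ q ∈ s, (insert a s).filter (α · < α q) = s.filter (α · < α q) :=
      fun q hq => by rw [filter_insert, if_neg (not_lt.2 (hmax q hq))]
    rw [sum_insert has, hrank_a, sum_congr rfl fun q hq => by rw [hrank q hq],
      ih (hT.mono (subset_insert a s)), card_insert_of_notMem has]
    by_cases he : Even #s
    · simp [he, he.neg_one_pow, Nat.even_add_one]
    · simp [he, (Nat.not_even_iff_odd.1 he).neg_one_pow, Nat.even_add_one]

variable (τ : A → W) (α : A → ℝ)

structure IsFiberMatching (S : Finset A) (m : A → A) : Prop where
  involutive : Function.Involutive m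
  ne_iff_mem : ∀ a, m a ≠ a ↔ a ∈ S
  fiber_eq : ∀ a, τ (m a) = τ a

-- The chords `{a, m a}` and `{b, m b}` interleave, `a` being the lowest of the four ends.
def Crosses (m : A → A) (a b : A) : Prop :=
  τ a = τ b ∧ α a < α b ∧ α b < α (m a) ∧ α (m a) < α (m b)

theorem exists_min_in_fiber {S : Finset A} (hS : S.Nonempty) :
    ∃ p₀ ∈ S, ∀ b ∈ S, τ b = τ p₀ → α p₀ ≤ α b := by
  obtain ⟨a, ha⟩ := hS
  obtain ⟨p₀, hp₀, hmin⟩ :=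
    (S.filter (τ · = τ a)).exists_min_image α ⟨a, mem_filter.2 ⟨ha, rfl⟩⟩
  rw [mem_filter] at hp₀
  exact ⟨p₀, hp₀.1, fun b hb hτb => hmin b (mem_filter.2 ⟨hb, hτb.trans hp₀.2⟩)⟩

variable {τ α}

theorem even_card_filter_erase_erase [DecidableEq W] {S : Finset A} {p₀ q : A} (hp₀ : p₀ ∈ S)
    (hq : q ∈ S) (hne : q ≠ p₀) (hτ : τ q = τ p₀) {w : W} (hS : Even #(S.filter (τ · = w))) :
    Even #(((S.erase p₀).erase q).filter (τ · = w)) := by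
  rw [filter_erase, filter_erase]
  by_cases hw : τ p₀ = w
  · have hp₀' : p₀ ∈ S.filter (τ · = w) := mem_filter.2 ⟨hp₀, hw⟩
    have hq' : q ∈ (S.filter (τ · = w)).erase p₀ :=
      mem_erase.2 ⟨hne, mem_filter.2 ⟨hq, hτ.trans hw⟩⟩
    have hpos := card_pos.2 ⟨q, hq'⟩
    rw [card_erase_of_mem hq', card_erase_of_mem hp₀'] at *
    obtain ⟨k, hk⟩ := hS
    exact ⟨k - 1, by omega⟩
  · have hq' : ¬τ q = w := hτ ▸ hw
    rwa [erase_eq_of_notMem (by simp [hq']), erase_eq_of_notMem (by simp [hw])]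

namespace IsFiberMatching

variable {S : Finset A} {m : A → A} {p₀ q : A}

theorem apply_mem (hm : IsFiberMatching τ S m) {a : A} (ha : a ∈ S) : m a ∈ S :=
  (hm.ne_iff_mem _).1 fun h => (hm.ne_iff_mem a).2 ha (h.symm.trans (hm.involutive a))

theorem even_card_filter [DecidableEq W] (hm : IsFiberMatching τ S m) (w : W) :
    Even #(S.filter (τ · = w)) := by
  refine even_card_of_involution m (fun a ha => ?_) (fun a _ => hm.involutive a)
    (fun a ha => (hm.ne_iff_mem a).2 (mem_filter.1 ha).1)
  rw [mem_filter] at ha ⊢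
  exact ⟨hm.apply_mem ha.1, (hm.fiber_eq a).trans ha.2⟩

theorem swap_comp_erase (hm : IsFiberMatching τ S m) (hp₀ : p₀ ∈ S) (hq : m p₀ = q) :
    IsFiberMatching τ ((S.erase p₀).erase q) (Equiv.swap p₀ q ∘ m) := by
  have hinv : ∀ x, m (m x) = x := hm.involutive
  have hS := hm.ne_iff_mem
  have hτ := hm.fiber_eq
  refine ⟨fun r => ?_, fun r => ?_, fun r => ?_⟩ <;>
    simp only [Function.comp_apply, Equiv.swap_apply_def, mem_erase] <;>
    grind

theorem swap_comp_insert (hm : IsFiberMatching τ S m) (hp₀ : p₀ ∉ S) (hq : q ∉ S)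
    (hne : p₀ ≠ q) (hτ : τ p₀ = τ q) :
    IsFiberMatching τ (insert p₀ (insert q S)) (Equiv.swap p₀ q ∘ m) := by
  have hinv : ∀ x, m (m x) = x := hm.involutive
  have hS := hm.ne_iff_mem
  have hτm := hm.fiber_eq
  refine ⟨fun r => ?_, fun r => ?_, fun r => ?_⟩ <;>
    simp only [Function.comp_apply, Equiv.swap_apply_def, mem_insert] <;>
    grind

theorem neg_one_pow_card_filter_interleaved {R : Type*} [Ring R] [DecidableEq W]
    (hα : ∀ a b, τ a = τ b → α a = α b → a = b) (hm : IsFiberMatching τ S m) (hq : m p₀ = q) :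
    (-1 : R) ^ #(((S.filter (τ · = τ p₀)).erase p₀).filter
        fun b => α b < α q ∧ α q < α (m b)) =
      (-1) ^ #(((S.filter (τ · = τ p₀)).erase p₀).filter (α · < α q)) := by
  have hinv : ∀ x, m (m x) = x := hm.involutive
  have hS := hm.ne_iff_mem
  have hτ := hm.fiber_eq
  set C := ((S.filter (τ · = τ p₀)).erase p₀).filter (α · < α q)
  -- `m` pairs up the darts below `q` whose partners are below `q` too.
  have hE : Even #(C.filter fun b => ¬ α q < α (m b)) := by
    refine even_card_of_involution m (fun b hb => ?_) (fun b _ => hinv b) (fun b hb => ?_) <;>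
      simp only [C, mem_filter, mem_erase] at hb ⊢ <;>
      grind
  rw [← card_filter_add_card_filter_not (s := C) (fun b => α q < α (m b)), pow_add,
    hE.neg_one_pow, mul_one, filter_filter]

end IsFiberMatching

variable [Fintype A]

variable (τ) in
def fiberMatchings (S : Finset A) : Finset (A → A) := univ.filter (IsFiberMatching τ S)

variable (τ α) in
def crossings (m : A → A) : ℕ := #(univ.filter fun ab : A × A => Crosses τ α m ab.1 ab.2)

@[simp]
theorem mem_fiberMatchings {S : Finset A} {m : A → A} :
    m ∈ fiberMatchings τ S ↔ IsFiberMatching τ S m := by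
  simp [fiberMatchings]

theorem fiberMatchings_empty : fiberMatchings τ ∅ = {id} := by
  ext m
  simp only [fiberMatchings, mem_filter, mem_univ, true_and, mem_singleton]
  refine ⟨fun hm => funext fun a => not_not.1 fun h => by simpa using (hm.ne_iff_mem a).1 h,
    ?_⟩
  rintro rfl
  exact ⟨fun _ => rfl, by simp, fun _ => rfl⟩

theorem crossings_id : crossings τ α id = 0 := by
  simp only [crossings, card_eq_zero, filter_eq_empty_iff]
  exact fun _ _ h => lt_asymm h.2.1 h.2.2.1

theorem IsFiberMatching.crossings_eq [DecidableEq W] {S : Finset A} {m : A → A} {p₀ q : A}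
    (hα : ∀ a b, τ a = τ b → α a = α b → a = b) (hm : IsFiberMatching τ S m) (hp₀ : p₀ ∈ S)
    (hmin : ∀ b ∈ S, τ b = τ p₀ → α p₀ ≤ α b) (hq : m p₀ = q) :
    crossings τ α m = #(((S.filter (τ · = τ p₀)).erase p₀).filter
        fun b => α b < α q ∧ α q < α (m b)) + crossings τ α (Equiv.swap p₀ q ∘ m) := by
  have hinv : ∀ x, m (m x) = x := hm.involutive
  have hS := hm.ne_iff_mem
  have hτ := hm.fiber_eq
  set B := ((S.filter (τ · = τ p₀)).erase p₀).filter fun b => α b < α q ∧ α q < α (m b)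
  unfold crossings
  rw [← card_filter_add_card_filter_not (fun ab : A × A => ab.1 = p₀), filter_filter,
    filter_filter]
  congr 1
  · rw [← one_mul #B, ← card_singleton p₀, ← card_product]
    congr 1
    ext ⟨a, b⟩
    simp only [Crosses, mem_filter, mem_product, mem_singleton, B, mem_erase]
    grind
  · congr 1
    ext ⟨a, b⟩
    simp only [Crosses, Function.comp_apply, Equiv.swap_apply_def]
    grind

theorem sum_filter_apply_eq_mul_sum_fiberMatchings {R : Type*} [Ring R] [DecidableEq W]
    (hα : ∀ a b, τ a = τ b → α a = α b → a = b) {S : Finset A} {p₀ q : A} (hp₀ : p₀ ∈ S)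
    (hmin : ∀ b ∈ S, τ b = τ p₀ → α p₀ ≤ α b) (hq : q ∈ (S.filter (τ · = τ p₀)).erase p₀) :
    ∑ m ∈ (fiberMatchings τ S).filter (· p₀ = q), (-1 : R) ^ crossings τ α m =
      (-1) ^ #(((S.filter (τ · = τ p₀)).erase p₀).filter (α · < α q)) *
        ∑ m ∈ fiberMatchings τ ((S.erase p₀).erase q), (-1) ^ crossings τ α m := by
  obtain ⟨hqp₀, hqS, hτq⟩ : q ≠ p₀ ∧ q ∈ S ∧ τ q = τ p₀ := by simpa using hq
  have hp₀S' : p₀ ∉ (S.erase p₀).erase q := by simp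
  have hqS' : q ∉ (S.erase p₀).erase q := by simp
  rw [mul_sum]
  refine sum_nbij' (Equiv.swap p₀ q ∘ ·) (Equiv.swap p₀ q ∘ ·) (fun m hm => ?_)
    (fun m hm => ?_) (fun m _ => ?_) (fun m _ => ?_) (fun m hm => ?_)
  · rw [mem_filter, mem_fiberMatchings] at hm
    exact mem_fiberMatchings.2 (hm.1.swap_comp_erase hp₀ hm.2)
  · rw [mem_fiberMatchings] at hm
    have hmp₀ : m p₀ = p₀ := not_not.1 fun h => hp₀S' ((hm.ne_iff_mem _).1 h)
    have hS := hm.swap_comp_insert hp₀S' hqS' hqp₀.symm hτq.symm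
    rw [insert_erase (mem_erase.2 ⟨hqp₀, hqS⟩), insert_erase hp₀] at hS
    exact mem_filter.2 ⟨mem_fiberMatchings.2 hS, by simp [hmp₀]⟩
  · exact funext fun r => Equiv.swap_apply_self _ _ _
  · exact funext fun r => Equiv.swap_apply_self _ _ _
  · rw [mem_filter, mem_fiberMatchings] at hm
    rw [hm.1.crossings_eq hα hp₀ hmin hm.2, pow_add,
      hm.1.neg_one_pow_card_filter_interleaved hα hm.2]

theorem sum_fiberMatchings_neg_one_pow_crossings {R : Type*} [Ring R] [DecidableEq W]
    (hα : ∀ a b, τ a = τ b → α a = α b → a = b) (S : Finset A)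
    (hS : ∀ w, Even #(S.filter (τ · = w))) :
    ∑ m ∈ fiberMatchings τ S, (-1 : R) ^ crossings τ α m = 1 := by
  induction S using Finset.strongInduction with | H S ih => ?_
  obtain rfl | hne := S.eq_empty_or_nonempty
  · rw [fiberMatchings_empty, sum_singleton, crossings_id, pow_zero]
  obtain ⟨p₀, hp₀, hmin⟩ := exists_min_in_fiber τ α hne
  set T := (S.filter (τ · = τ p₀)).erase p₀
  have hT : ∀ q, q ∈ T ↔ q ≠ p₀ ∧ q ∈ S ∧ τ q = τ p₀ := by simp [T]
  have hmaps : ∀ m ∈ fiberMatchings τ S, m p₀ ∈ T := fun m hm => by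
    rw [mem_fiberMatchings] at hm
    exact (hT _).2 ⟨(hm.ne_iff_mem p₀).2 hp₀, hm.apply_mem hp₀, hm.fiber_eq p₀⟩
  have hodd : ¬Even #T := by
    have hp₀T : p₀ ∈ S.filter (τ · = τ p₀) := mem_filter.2 ⟨hp₀, rfl⟩
    obtain ⟨k, hk⟩ := hS (τ p₀)
    have := card_pos.2 ⟨_, hp₀T⟩
    rw [card_erase_of_mem hp₀T]
    rintro ⟨j, hj⟩
    omega
  rw [← sum_fiberwise_of_maps_to hmaps]
  calc _ = ∑ q ∈ T, (-1 : R) ^ #(T.filter (α · < α q)) := sum_congr rfl fun q hq => by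
        obtain ⟨hqp₀, hqS, hτq⟩ := (hT q).1 hq
        rw [sum_filter_apply_eq_mul_sum_fiberMatchings hα hp₀ hmin hq,
          ih _ ((erase_subset q _).trans_ssubset (erase_ssubset hp₀))
            fun w => even_card_filter_erase_erase hp₀ hqS hqp₀ hτq (hS w), mul_one]
    _ = 1 := by
      rw [sum_neg_one_pow_card_filter_lt α fun a ha b hb h => ?_, if_neg hodd]
      exact hα a b (((hT a).1 ha).2.2.trans ((hT b).1 hb).2.2.symm) h

end FiberMatching

section TerminalGraph

variable {ends : F → V × V}

@[simp]
theorem oRev_oRev (p : F × Bool) : oRev (oRev p) = p := by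
  simp [oRev]

@[simp]
theorem oRev_ne (p : F × Bool) : oRev p ≠ p := by
  simp [oRev, Prod.ext_iff]

@[simp]
theorem oTail_oRev (p : F × Bool) : oTail ends (oRev p) = oHead ends p := by
  obtain ⟨f, _ | _⟩ := p <;> simp [oTail, oHead, oRev]

theorem oHead_ne_oTail (hloop : ∀ f : F, (ends f).1 ≠ (ends f).2) (p : F × Bool) :
    oHead ends p ≠ oTail ends p := by
  obtain ⟨f, _ | _⟩ := p <;> simp [oHead, oTail, hloop f, (hloop f).symm]

theorem card_filter_oTail_eq [DecidableEq V] (P : Finset F) (v : V) :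
    #((P ×ˢ univ).filter (oTail ends · = v)) =
      #(P.filter fun f => (ends f).1 = v) + #(P.filter fun f => (ends f).2 = v) := by
  rw [card_filter, sum_product, card_filter, card_filter, ← sum_add_distrib]
  refine sum_congr rfl fun f _ => ?_
  rw [Fintype.sum_bool]
  rfl

def shortMatching (m : F × Bool → F × Bool) : F × Bool → F × Bool :=
  fun p => if m p = oRev p then p else m p

def withLongDimers (m : F × Bool → F × Bool) : F × Bool → F × Bool :=
  fun p => if m p = p then oRev p else m p

theorem IsTerminalMatching.withLongDimers_shortMatching {m : F × Bool → F × Bool}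
    (hm : IsTerminalMatching ends m) : withLongDimers (shortMatching m) = m := by
  funext p
  have := hm.2.1 p
  simp only [withLongDimers, shortMatching]
  grind

namespace IsFiberMatching

variable {P : Finset F} {m : F × Bool → F × Bool}

theorem isTerminalMatching_withLongDimers (hm : IsFiberMatching (oTail ends) (P ×ˢ univ) m) :
    IsTerminalMatching ends (withLongDimers m) := by
  have hinv : ∀ p, m (m p) = p := hm.involutive
  have hS : ∀ p, m p ≠ p ↔ p.1 ∈ P := by simpa using hm.ne_iff_mem
  have htail := hm.fiber_eq
  have hfst : ∀ p : F × Bool, (oRev p).1 = p.1 := fun _ => rfl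
  refine ⟨fun p => ?_, fun p => ?_, fun p => ?_⟩ <;>
    simp only [withLongDimers] <;>
    grind [oRev_oRev, oRev_ne]

theorem shortMatching_withLongDimers (hloop : ∀ f : F, (ends f).1 ≠ (ends f).2)
    (hm : IsFiberMatching (oTail ends) (P ×ˢ univ) m) :
    shortMatching (withLongDimers m) = m := by
  funext p
  have := hm.fiber_eq p
  have := oHead_ne_oTail hloop p
  simp only [shortMatching, withLongDimers]
  grind [oTail_oRev]

end IsFiberMatching

variable [Fintype F]

def shortEdges (m : F × Bool → F × Bool) : Finset F :=
  univ.filter fun f => m (f, true) ≠ oRev (f, true)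

theorem isEvenSubgraph_iff [DecidableEq V] {P : Finset F} :
    IsEvenSubgraph ends P ↔ ∀ v, Even #((P ×ˢ univ).filter (oTail ends · = v)) := by
  simp only [IsEvenSubgraph, card_filter_oTail_eq]

theorem IsFiberMatching.shortEdges_withLongDimers {P : Finset F} {m : F × Bool → F × Bool}
    (hloop : ∀ f : F, (ends f).1 ≠ (ends f).2)
    (hm : IsFiberMatching (oTail ends) (P ×ˢ univ) m) :
    shortEdges (withLongDimers m) = P := by
  ext f
  have := hm.fiber_eq (f, true)
  have := hm.ne_iff_mem (f, true)
  have := oHead_ne_oTail hloop (f, true)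
  simp only [shortEdges, withLongDimers]
  grind [oTail_oRev]

theorem selfCross_eq_crossings (pos : V → ℂ) (m : F × Bool → F × Bool) :
    selfCross ends pos m = crossings (oTail ends) (oAng ends pos) (shortMatching m) := by
  rw [selfCross, crossings]
  congr 1
  ext ⟨a, b⟩
  simp only [isLow, Crosses, shortMatching]
  grind

namespace IsTerminalMatching

variable {m : F × Bool → F × Bool}

theorem mem_shortEdges_iff (hm : IsTerminalMatching ends m) (p : F × Bool) :
    p.1 ∈ shortEdges m ↔ m p ≠ oRev p := by
  obtain ⟨f, _ | _⟩ := p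
  · simp [shortEdges, oRev, hm.1.eq_iff, eq_comm]
  · simp [shortEdges]

theorem isFiberMatching_shortMatching (hm : IsTerminalMatching ends m) :
    IsFiberMatching (oTail ends) (shortEdges m ×ˢ univ) (shortMatching m) := by
  have hinv : ∀ p, m (m p) = p := hm.1
  have hshort := hm.mem_shortEdges_iff
  have hne := hm.2.1
  have htail := hm.2.2
  refine ⟨fun p => ?_, fun p => ?_, fun p => ?_⟩ <;>
    simp only [shortMatching, mem_product, mem_univ, and_true] <;>
    grind [oRev_oRev]

theorem isEvenSubgraph_shortEdges [DecidableEq V] (hm : IsTerminalMatching ends m) :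
    IsEvenSubgraph ends (shortEdges m) :=
  isEvenSubgraph_iff.2 hm.isFiberMatching_shortMatching.even_card_filter

theorem matchWeight_eq_prod {x : F → ℝ} (hx : ∀ f, 0 ≤ x f)
    (hm : IsTerminalMatching ends m) :
    matchWeight x m = ∏ f ∈ shortEdges m, x f := by
  calc matchWeight x m = ∏ p ∈ shortEdges m ×ˢ univ, √(x p.1) := by
        rw [matchWeight]
        congr 1
        ext p
        simp [hm.mem_shortEdges_iff]
    _ = ∏ f ∈ shortEdges m, x f := by
        rw [prod_product]
        exact prod_congr rfl fun f _ => by rw [Fintype.prod_bool, Real.mul_self_sqrt (hx f)]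

end IsTerminalMatching

theorem sum_shortMatching_eq_sum_fiberMatchings [DecidableEq F] {R : Type*} [AddCommMonoid R]
    (hloop : ∀ f : F, (ends f).1 ≠ (ends f).2) (P : Finset F)
    (g : (F × Bool → F × Bool) → R) :
    ∑ m ∈ (univ.filter fun m => IsTerminalMatching ends m).filter (shortEdges · = P),
      g (shortMatching m) = ∑ m ∈ fiberMatchings (oTail ends) (P ×ˢ univ), g m := by
  refine sum_nbij' shortMatching withLongDimers (fun m hm => ?_) (fun m hm => ?_)
    (fun m hm => ?_) (fun m hm => ?_) fun _ _ => rfl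
  · rw [mem_filter, mem_filter] at hm
    exact mem_fiberMatchings.2 (hm.2 ▸ hm.1.2.isFiberMatching_shortMatching)
  · rw [mem_fiberMatchings] at hm
    exact mem_filter.2 ⟨mem_filter.2 ⟨mem_univ _, hm.isTerminalMatching_withLongDimers⟩,
      hm.shortEdges_withLongDimers hloop⟩
  · exact (mem_filter.1 (mem_filter.1 hm).1).2.withLongDimers_shortMatching
  · exact (mem_fiberMatchings.1 hm).shortMatching_withLongDimers hloop

end TerminalGraph

section Drawing

variable {ends : F → V × V} {pos : V → ℂ}

theorem add_smul_oDir_mem_openSegment (p : F × Bool) {t : ℝ} (ht : t ∈ Set.Ioo 0 1) :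
    pos (oTail ends p) + t • oDir ends pos p ∈
      openSegment ℝ (pos (ends p.1).1) (pos (ends p.1).2) := by
  have hseg : openSegment ℝ (pos (oTail ends p)) (pos (oHead ends p)) =
      openSegment ℝ (pos (ends p.1).1) (pos (ends p.1).2) := by
    obtain ⟨f, _ | _⟩ := p <;> simp [oTail, oHead, openSegment_symm]
  rw [← hseg, openSegment_eq_image_lineMap]
  exact ⟨t, ht, by rw [AffineMap.lineMap_apply_module', oDir, add_comm]⟩

theorem eq_of_oTail_eq_of_oAng_eq (hinj : Function.Injective pos)
    (hloop : ∀ f : F, (ends f).1 ≠ (ends f).2)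
    (hplanar : ∀ f g : F, f ≠ g → ∀ z : ℂ,
      z ∈ openSegment ℝ (pos (ends f).1) (pos (ends f).2) →
      z ∈ openSegment ℝ (pos (ends g).1) (pos (ends g).2) → False)
    {p q : F × Bool} (htail : oTail ends p = oTail ends q)
    (hang : oAng ends pos p = oAng ends pos q) : p = q := by
  by_cases hpq : p.1 = q.1
  · obtain ⟨f, b⟩ := p
    obtain ⟨g, c⟩ := q
    obtain rfl : f = g := hpq
    cases b <;> cases c <;> simp_all [oTail, (hloop f).symm]
  · -- Two distinct edges leaving a vertex in the same direction would overlap near it.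
    have hdir : ∀ p, oDir ends pos p ≠ 0 := fun p =>
      sub_ne_zero.2 (hinj.ne (oHead_ne_oTail hloop p))
    obtain ⟨r, s, hr, hs, hrs⟩ :=
      (Complex.sameRay_iff.2 (Or.inr (Or.inr hang))).exists_pos (hdir p) (hdir q)
    have hpoint : pos (oTail ends p) + (r / (r + s)) • oDir ends pos p =
        pos (oTail ends q) + (s / (r + s)) • oDir ends pos q := by
      rw [htail, div_eq_inv_mul, div_eq_inv_mul, mul_smul, mul_smul, hrs]
    have hratio : ∀ {a b : ℝ}, 0 < a → 0 < b → a / (a + b) ∈ Set.Ioo 0 1 := fun ha hb =>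
      ⟨by positivity, (div_lt_one (by positivity)).2 (by linarith)⟩
    exact (hplanar p.1 q.1 hpq _ (add_smul_oDir_mem_openSegment p (hratio hr hs))
      (hpoint ▸ add_smul_oDir_mem_openSegment q (add_comm s r ▸ hratio hs hr))).elim

end Drawing

theorem statement8_general [DecidableEq V] [Fintype F] [DecidableEq F]
    (ends : F → V × V) (pos : V → ℂ) (x : F → ℝ)
    (hx : ∀ f, 0 ≤ x f)
    (hinj : Function.Injective pos)
    (hloop : ∀ f : F, (ends f).1 ≠ (ends f).2)
    (hplanar : ∀ f g : F, f ≠ g → ∀ z : ℂ,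
      z ∈ openSegment ℝ (pos (ends f).1) (pos (ends f).2) →
      z ∈ openSegment ℝ (pos (ends g).1) (pos (ends g).2) → False) :
    ∑ m ∈ Finset.univ.filter
        (fun m : F × Bool → F × Bool => IsTerminalMatching ends m),
      (-1 : ℝ) ^ (selfCross ends pos m) * matchWeight x m
    = ∑ P ∈ Finset.univ.filter (fun P : Finset F => IsEvenSubgraph ends P),
        ∏ f ∈ P, x f := by
  have hmaps : ∀ m ∈ univ.filter (fun m => IsTerminalMatching ends m),
      shortEdges m ∈ univ.filter (fun P => IsEvenSubgraph ends P) := fun m hm =>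
    mem_filter.2 ⟨mem_univ _, (mem_filter.1 hm).2.isEvenSubgraph_shortEdges⟩
  rw [← sum_fiberwise_of_maps_to hmaps]
  refine sum_congr rfl fun P hP => ?_
  calc _ = ∑ m ∈ (univ.filter fun m => IsTerminalMatching ends m).filter (shortEdges · = P),
        (-1 : ℝ) ^ crossings (oTail ends) (oAng ends pos) (shortMatching m) * ∏ f ∈ P, x f := by
        refine sum_congr rfl fun m hm => ?_
        rw [mem_filter, mem_filter] at hm
        rw [selfCross_eq_crossings, hm.1.2.matchWeight_eq_prod hx, hm.2]
    _ = (∑ m ∈ fiberMatchings (oTail ends) (P ×ˢ univ),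
        (-1 : ℝ) ^ crossings (oTail ends) (oAng ends pos) m) * ∏ f ∈ P, x f := by
        rw [← sum_mul, ← sum_shortMatching_eq_sum_fiberMatchings hloop]
    _ = ∏ f ∈ P, x f := by
        rw [sum_fiberMatchings_neg_one_pow_crossings
          (fun _ _ => eq_of_oTail_eq_of_oAng_eq hinj hloop hplanar) _
          (isEvenSubgraph_iff.1 (mem_filter.1 hP).2), one_mul]

/-- For a finite planar weighted graph `(G,x)` (drawn with straight
edges, no loops, no crossings), the signed dimer partition function on the terminal
graph `G^K` equals the even-subgraph generating polynomial:
`Σ_{D ∈ D(G^K)} (-1)^{t(D)} x^K(D) = Z_Ising(G,x) = Σ_{P even} Π_{e∈P} x_e`. -/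
theorem statement8 [Fintype V] [DecidableEq V] [Fintype F] [DecidableEq F]
    (ends : F → V × V) (pos : V → ℂ) (x : F → ℝ)
    (hx : ∀ f, 0 ≤ x f)
    (hinj : Function.Injective pos)
    (hloop : ∀ f : F, (ends f).1 ≠ (ends f).2)
    (hplanar : ∀ f g : F, f ≠ g → ∀ z : ℂ,
      z ∈ openSegment ℝ (pos (ends f).1) (pos (ends f).2) →
      z ∈ openSegment ℝ (pos (ends g).1) (pos (ends g).2) → False)
    (hvert : ∀ (f : F) (v : V),
      pos v ∉ openSegment ℝ (pos (ends f).1) (pos (ends f).2)) :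
    ∑ m ∈ Finset.univ.filter
        (fun m : F × Bool → F × Bool => IsTerminalMatching ends m),
      (-1 : ℝ) ^ (selfCross ends pos m) * matchWeight x m
    = ∑ P ∈ Finset.univ.filter (fun P : Finset F => IsEvenSubgraph ends P),
        ∏ f ∈ P, x f :=
  statement8_general ends pos x hx hinj hloop hplanar
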